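/- Let Θ be a nonempty closed convex subset of ℝ^d, let Z be a metric space with its Borel σ-algebra, let γ, β > 0 and ε > 0 with ε < γ/β, and for each θ ∈ Θ let D(θ) be a Borel probability measure on Z (the distribution induced by deploying the model θ). Let ℓ : Z × ℝ^d → ℝ be a loss such that: (i) for each z ∈ Z, the map ξ ↦ ℓ(z; ξ) is differentiable and γ-strongly convex on Θ; (ii) for each ξ ∈ Θ, the map z ↦ ∇_ξ ℓ(z; ξ) is β-Lipschitz, and for each z, the map ξ ↦ ∇_ξ ℓ(z; ξ) is β-Lipschitz on Θ; (iii) for each θ ∈ Θ, the map ξ ↦ E_{Z∼D(θ)}[ℓ(Z; ξ)] is differentiable with gradient ξ ↦ E_{Z∼D(θ)}[∇_ξ ℓ(Z; ξ)], where z ↦ ∇_ξ ℓ(z; ξ) is integrable with respect to every D(θ); (iv) the family (D(θ))_{θ∈Θ} is ε-sensitive in dual (Kantorovich–Rubinstein) form. Let G : Θ → Θ be such that for every θ ∈ Θ, G(θ) minimizes ξ ↦ E_{Z∼D(θ)}[ℓ(Z; ξ)] over Θ. Then there is a unique θ_PS ∈ Θ with G(θ_PS) = θ_PS, and for any θ₀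 ∈ Θ with θ₀ ≠ θ_PS, the iterates θ_{t+1} = G(θ_t) satisfy ‖θ_t − θ_PS‖ ≤ δ for every δ > 0 and every natural number t ≥ (1 − εβ/γ)⁻¹ · log(‖θ₀ − θ_PS‖/δ). -/

import Mathlib

/-!
Strong convexity makes every expected gradient `F θ ξ = E_{D(θ)} ∇ℓ(·; ξ)` γ-strongly monotone in
`ξ`, so the first-order optimality conditions of `G θ` and `G θ'` give
`γ ‖G θ - G θ'‖ ≤ ‖F θ (G θ') - F θ' (G θ')‖`. Testing the β-Lipschitz map `z ↦ ∇ℓ(z; G θ')`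
against a norming functional, ε-sensitivity bounds the right-hand side by `β ε ‖θ - θ'‖`. Hence
`G` is a contraction of the complete set `Θ` with constant `εβ/γ < 1`, and Banach's fixed point
theorem gives `θ_PS` together with the geometric rate.
-/

open MeasureTheory Set
open scoped NNReal RealInnerProductSpace

section Calculus

variable {E : Type*} [NormedAddCommGroup E] [NormedSpace ℝ E]

theorem ConvexOn.hasFDerivAt_apply_sub_le {s : Set E} {f : E → ℝ} {f' : E →L[ℝ] ℝ}
    (hf : ConvexOn ℝ s f) {x y : E} (hx : x ∈ s) (hy : y ∈ s) (hfx : HasFDerivAt f f' x) :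
    f' (y - x) ≤ f y - f x := by
  let L := AffineMap.lineMap (k := ℝ) x y
  have hconv : ConvexOn ℝ (Icc 0 1) (f ∘ L) :=
    (hf.comp_affineMap L).subset (fun _ ht => hf.1.lineMap_mem hx hy ht) (convex_Icc 0 1)
  have hderiv : HasDerivAt (f ∘ L) (f' (y - x)) 0 := by
    have hL : HasDerivAt L (y - x) 0 := AffineMap.hasDerivAt_lineMap
    exact (by simpa [L] using hfx : HasFDerivAt f f' (L 0)).comp_hasDerivAt 0 hL
  simpa [slope, L] using
    hconv.le_slope_of_hasDerivWithinAt (by simp) (by simp) zero_lt_one hderiv.hasDerivWithinAt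

end Calculus

section InnerProduct

variable {E : Type*} [NormedAddCommGroup E] [InnerProductSpace ℝ E]

theorem IsMinOn.inner_nonneg_of_hasGradientAt [CompleteSpace E] {s : Set E} {f : E → ℝ}
    {x y f' : E} (hmin : IsMinOn f s x) (hs : Convex ℝ s) (hx : x ∈ s) (hy : y ∈ s)
    (hf : HasGradientAt f f' x) : 0 ≤ ⟪f', y - x⟫ :=
  hmin.localize.hasFDerivWithinAt_nonneg hf.hasFDerivAt.hasFDerivWithinAt
    (sub_mem_posTangentConeAt_of_segment_subset (hs.segment_subset hx hy))

theorem StrongConvexOn.le_inner_sub_of_hasGradientAt [CompleteSpace E] {s : Set E} {f : E → ℝ}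
    {γ : ℝ} (hf : StrongConvexOn s γ f) {x y f'x f'y : E} (hx : x ∈ s) (hy : y ∈ s)
    (hfx : HasGradientAt f f'x x) (hfy : HasGradientAt f f'y y) :
    γ * ‖y - x‖ ^ 2 ≤ ⟪f'y - f'x, y - x⟫ := by
  have hconv := strongConvexOn_iff_convex.1 hf
  have hderiv {z : E} {f'z : E} (hfz : HasGradientAt f f'z z) :
      HasFDerivAt (fun ξ => f ξ - γ / 2 * ‖ξ‖ ^ 2)
        (InnerProductSpace.toDual ℝ E f'z - (γ / 2) • (2 • innerSL ℝ z)) z :=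
    hfz.hasFDerivAt.sub ((hasStrictFDerivAt_norm_sq z).hasFDerivAt.const_mul (γ / 2))
  have hxy := hconv.hasFDerivAt_apply_sub_le hx hy (hderiv hfx)
  have hyx := hconv.hasFDerivAt_apply_sub_le hy hx (hderiv hfy)
  simp only [sub_apply, smul_apply, InnerProductSpace.toDual_apply_apply, innerSL_apply_apply,
    smul_eq_mul, nsmul_eq_mul, Nat.cast_ofNat] at hxy hyx
  rw [← real_inner_self_eq_norm_sq]
  simp only [inner_sub_left, inner_sub_right, real_inner_comm x y] at hxy hyx ⊢
  linarith

theorem mul_norm_sub_le_norm_sub_of_variational_inequalities {F₁ F₂ : E → E} {γ : ℝ} {x y : E}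
    (hmono : γ * ‖y - x‖ ^ 2 ≤ ⟪F₁ y - F₁ x, y - x⟫)
    (hx : 0 ≤ ⟪F₁ x, y - x⟫) (hy : 0 ≤ ⟪F₂ y, x - y⟫) :
    γ * ‖y - x‖ ≤ ‖F₁ y - F₂ y‖ := by
  have h : γ * ‖y - x‖ ^ 2 ≤ ‖F₁ y - F₂ y‖ * ‖y - x‖ :=
    calc γ * ‖y - x‖ ^ 2 ≤ ⟪F₁ y - F₁ x, y - x⟫ := hmono
      _ ≤ ⟪F₁ y - F₂ y, y - x⟫ := by
        rw [← neg_sub y x, inner_neg_right] at hy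
        simp only [inner_sub_left]
        linarith
      _ ≤ ‖F₁ y - F₂ y‖ * ‖y - x‖ := real_inner_le_norm _ _
  rcases (norm_nonneg (y - x)).eq_or_lt with h0 | hpos
  · rw [← h0, mul_zero]
    exact norm_nonneg _
  · rw [sq, ← mul_assoc] at h
    exact le_of_mul_le_mul_right h hpos

end InnerProduct

theorem le_inner_integral_of_forall_le {Z E : Type*} [MeasurableSpace Z]
    [NormedAddCommGroup E] [InnerProductSpace ℝ E] [CompleteSpace E]
    {μ : Measure Z} [IsProbabilityMeasure μ] {u : Z → E} (hu : Integrable u μ) {w : E} {c : ℝ}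
    (h : ∀ z, c ≤ ⟪u z, w⟫) : c ≤ ⟪∫ z, u z ∂μ, w⟫ :=
  calc c = ∫ _, c ∂μ := by simp
    _ ≤ ∫ z, ⟪w, u z⟫ ∂μ :=
      integral_mono (integrable_const c) (hu.const_inner w) fun z =>
        (h z).trans_eq (real_inner_comm _ _)
    _ = ⟪∫ z, u z ∂μ, w⟫ := by rw [integral_inner hu, real_inner_comm]

theorem norm_integral_sub_integral_le_of_dual_sensitivity {ι Z E : Type*} [MetricSpace Z]
    [MeasurableSpace Z] [NormedAddCommGroup E] [NormedSpace ℝ E] [CompleteSpace E]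
    (D : ι → Measure Z) (S : Set ι) (r : ι → ι → ℝ)
    (hsens : ∀ g : Z → ℝ, LipschitzWith 1 g → (∀ i ∈ S, Integrable g (D i)) →
      ∀ i ∈ S, ∀ j ∈ S, |∫ z, g z ∂D i - ∫ z, g z ∂D j| ≤ r i j)
    {h : Z → E} {K : ℝ} (hK : 0 < K) (hh : ∀ z z', ‖h z - h z'‖ ≤ K * dist z z')
    (hint : ∀ i ∈ S, Integrable h (D i)) {i j : ι} (hi : i ∈ S) (hj : j ∈ S) :
    ‖∫ z, h z ∂D i - ∫ z, h z ∂D j‖ ≤ K * r i j := by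
  obtain ⟨φ, hφ, hφw⟩ := exists_dual_vector'' ℝ (∫ z, h z ∂D i - ∫ z, h z ∂D j)
  let g : Z → ℝ := fun z => K⁻¹ * φ (h z)
  have hg : LipschitzWith 1 g := LipschitzWith.of_dist_le_mul fun z z' => by
    calc dist (g z) (g z') = K⁻¹ * ‖φ (h z - h z')‖ := by
          rw [Real.dist_eq, ← mul_sub, ← map_sub, abs_mul, abs_of_pos (inv_pos.2 hK),
            Real.norm_eq_abs]
      _ ≤ K⁻¹ * (K * dist z z') := by
          gcongr
          exact (φ.le_opNorm _).trans ((mul_le_of_le_one_left (norm_nonneg _) hφ).trans (hh z z'))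
      _ = (1 : ℝ≥0) * dist z z' := by rw [NNReal.coe_one, one_mul, inv_mul_cancel_left₀ hK.ne']
  have hgint (k : ι) (hk : k ∈ S) : Integrable g (D k) :=
    (φ.integrable_comp (hint k hk)).const_mul K⁻¹
  have hgap : ∫ z, g z ∂D i - ∫ z, g z ∂D j = K⁻¹ * ‖∫ z, h z ∂D i - ∫ z, h z ∂D j‖ := by
    simp only [g, integral_const_mul, φ.integral_comp_comm (hint i hi),
      φ.integral_comp_comm (hint j hj), ← mul_sub, ← map_sub, hφw]
    rfl
  have := hsens g hg hgint i hi j hj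
  rw [hgap, abs_of_nonneg (by positivity), inv_mul_le_iff₀ hK] at this
  exact this

theorem LipschitzOnWith.exists_fixedPoint_dist_iterate_le {X : Type*} [MetricSpace X]
    {s : Set X} {f : X → X} {K : ℝ≥0} (hf : LipschitzOnWith K f s) (hK : K < 1)
    (hs : IsComplete s) (hne : s.Nonempty) (hmaps : MapsTo f s s) :
    ∃ p ∈ s, f p = p ∧ (∀ q ∈ s, f q = q → q = p) ∧
      ∀ x ∈ s, ∀ n : ℕ, dist (f^[n] x) p ≤ K ^ n * dist x p := by
  have : CompleteSpace s := hs.completeSpace_coe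
  have : Nonempty s := hne.to_subtype
  have hF : ContractingWith K (hmaps.restrict f s s) := ⟨hK, hf.mapsToRestrict hmaps⟩
  let p := ContractingWith.fixedPoint _ hF
  refine ⟨p, p.2, congrArg Subtype.val hF.fixedPoint_isFixedPt,
    fun q hq hfq => congrArg Subtype.val (hF.fixedPoint_unique (x := ⟨q, hq⟩) (Subtype.ext hfq)),
    fun x hx n => ?_⟩
  have := (hF.toLipschitzWith.iterate n).dist_le_mul ⟨x, hx⟩ p
  rwa [(hF.fixedPoint_isFixedPt.iterate n).eq, Subtype.dist_eq, Subtype.dist_eq,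
    hmaps.coe_iterate_restrict, NNReal.coe_pow] at this

theorem pow_mul_le_of_inv_one_sub_mul_log_le {c R δ : ℝ} (hc0 : 0 ≤ c) (hc1 : c < 1)
    (hδ : 0 < δ) {t : ℕ} (ht : (1 - c)⁻¹ * Real.log (R / δ) ≤ t) : c ^ t * R ≤ δ := by
  rcases le_or_gt R 0 with hR | hR
  · exact (mul_nonpos_of_nonneg_of_nonpos (pow_nonneg hc0 t) hR).trans hδ.le
  have hlog : Real.log (R / δ) ≤ t * (1 - c) := by
    rwa [inv_mul_le_iff₀ (sub_pos.2 hc1), mul_comm] at ht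
  -- `c ≤ exp (c - 1)` turns the geometric rate into an exponential one
  have hpow : c ^ t ≤ Real.exp (-(t * (1 - c))) :=
    calc c ^ t ≤ Real.exp (c - 1) ^ t :=
          pow_le_pow_left₀ hc0 (by linarith [Real.add_one_le_exp (c - 1)]) t
      _ = Real.exp (-(t * (1 - c))) := by rw [← Real.exp_nat_mul]; ring_nf
  calc c ^ t * R ≤ Real.exp (-Real.log (R / δ)) * R :=
        mul_le_mul_of_nonneg_right (hpow.trans (Real.exp_le_exp.2 (neg_le_neg hlog))) hR.le
    _ = δ := by rw [Real.exp_neg, Real.exp_log (div_pos hR hδ)]; field_simp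

theorem rrm_converges_to_stable_point_general
    {d : ℕ} (Θ : Set (EuclideanSpace ℝ (Fin d)))
    (hΘne : Θ.Nonempty) (hΘclosed : IsClosed Θ) (hΘconv : Convex ℝ Θ)
    {Z : Type*} [MetricSpace Z] [MeasurableSpace Z]
    (ℓ : Z → EuclideanSpace ℝ (Fin d) → ℝ)
    (γ β ε : ℝ) (hγ : 0 < γ) (hβ : 0 < β) (hε : 0 < ε)
    (hcontr : ε < γ / β)
    (D : EuclideanSpace ℝ (Fin d) → Measure Z)
    (hProb : ∀ θ ∈ Θ, IsProbabilityMeasure (D θ))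
    -- (i) differentiability and γ-strong convexity of the loss in the parameter
    (hdiffℓ : ∀ z : Z, Differentiable ℝ (ℓ z))
    (hsc : ∀ z : Z, ConvexOn ℝ Θ (fun ξ => ℓ z ξ - γ / 2 * ‖ξ‖ ^ 2))
    -- (ii) β-joint smoothness of the loss
    (hsmoothz : ∀ ξ ∈ Θ, ∀ z z' : Z,
      ‖gradient (ℓ z) ξ - gradient (ℓ z') ξ‖ ≤ β * dist z z')
    -- (iii) differentiability of the expected loss with gradient the expected gradient
    (hdiff : ∀ θ ∈ Θ, Differentiable ℝ (fun ξ => ∫ z, ℓ z ξ ∂(D θ)))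
    (hgradInt : ∀ (ξ : EuclideanSpace ℝ (Fin d)), ∀ θ ∈ Θ,
      Integrable (fun z => gradient (ℓ z) ξ) (D θ))
    (hgrad : ∀ θ ∈ Θ, ∀ ξ : EuclideanSpace ℝ (Fin d),
      gradient (fun ξ' => ∫ z, ℓ z ξ' ∂(D θ)) ξ = ∫ z, gradient (ℓ z) ξ ∂(D θ))
    -- (iv) ε-sensitivity in dual (Kantorovich–Rubinstein) form
    (hsens : ∀ g : Z → ℝ, LipschitzWith 1 g → (∀ θ ∈ Θ, Integrable g (D θ)) →
      ∀ θ ∈ Θ, ∀ θ' ∈ Θ,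
        |(∫ z, g z ∂(D θ)) - ∫ z, g z ∂(D θ')| ≤ ε * ‖θ - θ'‖)
    -- the RRM update operator
    (G : EuclideanSpace ℝ (Fin d) → EuclideanSpace ℝ (Fin d))
    (hGmem : ∀ θ ∈ Θ, G θ ∈ Θ)
    (hGmin : ∀ θ ∈ Θ, ∀ ξ ∈ Θ, (∫ z, ℓ z (G θ) ∂(D θ)) ≤ ∫ z, ℓ z ξ ∂(D θ)) :
    ∃ θPS ∈ Θ, G θPS = θPS ∧
      (∀ θ' ∈ Θ, G θ' = θ' → θ' = θPS) ∧
      ∀ θ₀ ∈ Θ, θ₀ ≠ θPS → ∀ δ : ℝ, 0 < δ → ∀ t : ℕ,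
        (1 - ε * (β / γ))⁻¹ * Real.log (‖θ₀ - θPS‖ / δ) ≤ (t : ℝ) →
        ‖G^[t] θ₀ - θPS‖ ≤ δ := by
  let F θ ξ := ∫ z, gradient (ℓ z) ξ ∂D θ
  have hopt (θ) (hθ : θ ∈ Θ) (ξ) (hξ : ξ ∈ Θ) : 0 ≤ ⟪F θ (G θ), ξ - G θ⟫ := by
    have hmin : IsMinOn (fun ξ => ∫ z, ℓ z ξ ∂D θ) Θ (G θ) := isMinOn_iff.2 (hGmin θ hθ)
    refine hmin.inner_nonneg_of_hasGradientAt hΘconv (hGmem θ hθ) hξ ?_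
    simpa only [hgrad θ hθ] using (hdiff θ hθ (G θ)).hasGradientAt
  have hmono (θ) (hθ : θ ∈ Θ) (x) (hx : x ∈ Θ) (y) (hy : y ∈ Θ) :
      γ * ‖y - x‖ ^ 2 ≤ ⟪F θ y - F θ x, y - x⟫ := by
    have := hProb θ hθ
    rw [← integral_sub (hgradInt y θ hθ) (hgradInt x θ hθ)]
    exact le_inner_integral_of_forall_le ((hgradInt y θ hθ).sub (hgradInt x θ hθ)) fun z =>
      (strongConvexOn_iff_convex.2 (hsc z)).le_inner_sub_of_hasGradientAt hx hy
        (hdiffℓ z x).hasGradientAt (hdiffℓ z y).hasGradientAt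
  have hshift (ξ) (hξ : ξ ∈ Θ) (θ) (hθ : θ ∈ Θ) (θ') (hθ' : θ' ∈ Θ) :
      ‖F θ ξ - F θ' ξ‖ ≤ β * (ε * ‖θ - θ'‖) :=
    norm_integral_sub_integral_le_of_dual_sensitivity D Θ (fun θ θ' => ε * ‖θ - θ'‖) hsens hβ
      (hsmoothz ξ hξ) (hgradInt ξ) hθ hθ'
  have hc1 : ε * (β / γ) < 1 := by
    rw [← mul_div_assoc, div_lt_one hγ]
    exact (lt_div_iff₀ hβ).1 hcontr
  have hlip : LipschitzOnWith ⟨ε * (β / γ), by positivity⟩ G Θ := by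
    refine LipschitzOnWith.of_dist_le_mul fun θ hθ θ' hθ' => ?_
    have hstable := mul_norm_sub_le_norm_sub_of_variational_inequalities
      (hmono θ hθ _ (hGmem θ hθ) _ (hGmem θ' hθ')) (hopt θ hθ _ (hGmem θ' hθ'))
      (hopt θ' hθ' _ (hGmem θ hθ))
    rw [dist_eq_norm, dist_eq_norm, norm_sub_rev]
    calc ‖G θ' - G θ‖ ≤ β * (ε * ‖θ - θ'‖) / γ :=
          (le_div_iff₀' hγ).2 (hstable.trans (hshift _ (hGmem θ' hθ') θ hθ θ' hθ'))
      _ = ε * (β / γ) * ‖θ - θ'‖ := by ring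
  obtain ⟨θPS, hθPS, hfix, huniq, hiter⟩ :=
    hlip.exists_fixedPoint_dist_iterate_le hc1 hΘclosed.isComplete hΘne hGmem
  refine ⟨θPS, hθPS, hfix, huniq, fun θ₀ hθ₀ _ δ hδ t ht => ?_⟩
  simpa only [dist_eq_norm] using (hiter θ₀ hθ₀ t).trans
    (pow_mul_le_of_inv_one_sub_mul_log_le (by positivity) hc1 hδ ht)

/-- Claim (2) of Theorem 3.5 of Perdomo et al. as stated in the paper: if `ε < γ/β`,
repeated risk minimization converges to a unique performatively stable point at a linear
rate: `‖θ_t − θ_PS‖ ≤ δ` once `t ≥ (1 − εβ/γ)⁻¹ log(‖θ₀ − θ_PS‖/δ)`. -/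
theorem rrm_converges_to_stable_point
    {d : ℕ} (Θ : Set (EuclideanSpace ℝ (Fin d)))
    (hΘne : Θ.Nonempty) (hΘclosed : IsClosed Θ) (hΘconv : Convex ℝ Θ)
    {Z : Type*} [MetricSpace Z] [MeasurableSpace Z] [BorelSpace Z]
    (ℓ : Z → EuclideanSpace ℝ (Fin d) → ℝ)
    (γ β ε : ℝ) (hγ : 0 < γ) (hβ : 0 < β) (hε : 0 < ε)
    (hcontr : ε < γ / β)
    (D : EuclideanSpace ℝ (Fin d) → Measure Z)
    (hProb : ∀ θ ∈ Θ, IsProbabilityMeasure (D θ))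
    -- (i) differentiability and γ-strong convexity of the loss in the parameter
    (hdiffℓ : ∀ z : Z, Differentiable ℝ (ℓ z))
    (hsc : ∀ z : Z, ConvexOn ℝ Θ (fun ξ => ℓ z ξ - γ / 2 * ‖ξ‖ ^ 2))
    -- (ii) β-joint smoothness of the loss
    (hsmoothz : ∀ ξ ∈ Θ, ∀ z z' : Z,
      ‖gradient (ℓ z) ξ - gradient (ℓ z') ξ‖ ≤ β * dist z z')
    (hsmoothξ : ∀ z : Z, ∀ ξ ∈ Θ, ∀ ξ' ∈ Θ,
      ‖gradient (ℓ z) ξ - gradient (ℓ z) ξ'‖ ≤ β * ‖ξ - ξ'‖)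
    -- (iii) differentiability of the expected loss with gradient the expected gradient
    (hdiff : ∀ θ ∈ Θ, Differentiable ℝ (fun ξ => ∫ z, ℓ z ξ ∂(D θ)))
    (hgradInt : ∀ (ξ : EuclideanSpace ℝ (Fin d)), ∀ θ ∈ Θ,
      Integrable (fun z => gradient (ℓ z) ξ) (D θ))
    (hgrad : ∀ θ ∈ Θ, ∀ ξ : EuclideanSpace ℝ (Fin d),
      gradient (fun ξ' => ∫ z, ℓ z ξ' ∂(D θ)) ξ = ∫ z, gradient (ℓ z) ξ ∂(D θ))
    -- (iv) ε-sensitivity in dual (Kantorovich–Rubinstein) form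
    (hsens : ∀ g : Z → ℝ, LipschitzWith 1 g → (∀ θ ∈ Θ, Integrable g (D θ)) →
      ∀ θ ∈ Θ, ∀ θ' ∈ Θ,
        |(∫ z, g z ∂(D θ)) - ∫ z, g z ∂(D θ')| ≤ ε * ‖θ - θ'‖)
    -- the RRM update operator
    (G : EuclideanSpace ℝ (Fin d) → EuclideanSpace ℝ (Fin d))
    (hGmem : ∀ θ ∈ Θ, G θ ∈ Θ)
    (hGmin : ∀ θ ∈ Θ, ∀ ξ ∈ Θ, (∫ z, ℓ z (G θ) ∂(D θ)) ≤ ∫ z, ℓ z ξ ∂(D θ)) :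
    ∃ θPS ∈ Θ, G θPS = θPS ∧
      (∀ θ' ∈ Θ, G θ' = θ' → θ' = θPS) ∧
      ∀ θ₀ ∈ Θ, θ₀ ≠ θPS → ∀ δ : ℝ, 0 < δ → ∀ t : ℕ,
        (1 - ε * (β / γ))⁻¹ * Real.log (‖θ₀ - θPS‖ / δ) ≤ (t : ℝ) →
        ‖G^[t] θ₀ - θPS‖ ≤ δ :=
  rrm_converges_to_stable_point_general Θ hΘne hΘclosed hΘconv ℓ γ β ε hγ hβ hε hcontr D hProb
    hdiffℓ hsc hsmoothz hdiff hgradInt hgrad hsens G hGmem hGmin
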